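/- arXiv:2203.11718 — 7 statements merged into one kernel-verified Lean document; each statement's English description precedes it below -/
import Mathlib

section
/- (Lemma 2.2 (ii) in the Haar-type setting) Under the Haar-type hypotheses, let m ≥ 1 be an integer and let û ∈ H⁺₀. Then the function η(α) := (1/(m+1)) · e₀ᵀ (P(α))^{m+1} e₀ − ∑_k û k · α k is convex on the convex set H⁺₀, and its minimum over H⁺₀ is attained at α̂ := H · D(û)^{1/m} · Hᵀ e₀ (the entrywise m-th root of the nonnegative diagonal of D(û)); i.e., η(α̂) ≤ η(α) for all α ∈ H⁺₀. -/
/-!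
In the common eigenbasis `H` every Galerkin matrix is diagonal, `P(α) = H D(α) Hᵀ`, and
`P(α) e₀ = α` turns into `Hᵀ α = D(α) Hᵀ e₀`, where `Hᵀ e₀` has no zero entry. So `H⁺₀` is the
preimage of the nonnegative orthant under the linear map `α ↦ D(α)`, and with `d = D(α)`,
`λ = D(û)`, `v = Hᵀ e₀`,
`η(α) = ∑ᵢ vᵢ² (dᵢ^{m+1}/(m+1) - λᵢ dᵢ)`.
Each summand is convex in `dᵢ ≥ 0` and, by Bernoulli's inequality, minimal at `dᵢ = λᵢ^{1/m}`,
which is exactly `D(α̂)`.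
-/

open Matrix Set

noncomputable def powEntropy (m : ℕ) (l x : ℝ) : ℝ := x ^ (m + 1) / (m + 1) - l * x

theorem convexOn_powEntropy (m : ℕ) (l : ℝ) : ConvexOn ℝ (Ici 0) (powEntropy m l) :=
  ((convexOn_pow (m + 1)).smul (by positivity : (0 : ℝ) ≤ ((m : ℝ) + 1)⁻¹)).sub
    ((LinearMap.mulLeft ℝ l).concaveOn (convex_Ici 0)) |>.congr fun x _ => by
      simp [powEntropy, div_eq_inv_mul]

theorem powEntropy_pow_le (m : ℕ) {c u : ℝ} (hc : 0 ≤ c) (hu : 0 ≤ u) :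
    powEntropy m (c ^ m) c ≤ powEntropy m (c ^ m) u := by
  suffices h : (m + 1) * (c ^ m * u) ≤ m * c ^ (m + 1) + u ^ (m + 1) by
    simp only [powEntropy, ← pow_succ]
    rw [sub_le_sub_iff, div_add' _ _ _ (by positivity), div_add' _ _ _ (by positivity),
      div_le_div_iff_of_pos_right (by positivity)]
    linarith
  rcases hc.eq_or_lt with rfl | hc
  · cases m <;> simp; positivity
  -- Bernoulli's inequality at `u / c = 1 + (u / c - 1)`
  have h := one_add_mul_le_pow (a := u / c - 1) (by linarith [div_nonneg hu hc.le]) (m + 1)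
  rw [add_sub_cancel, div_pow, le_div_iff₀ (by positivity)] at h
  calc (m + 1) * (c ^ m * u)
      = (1 + (m + 1 : ℕ) * (u / c - 1)) * c ^ (m + 1) + m * c ^ (m + 1) := by
        field_simp; push_cast; ring
    _ ≤ m * c ^ (m + 1) + u ^ (m + 1) := by linarith

theorem powEntropy_rpow_inv_le {m : ℕ} (hm : m ≠ 0) {l u : ℝ} (hl : 0 ≤ l) (hu : 0 ≤ u) :
    powEntropy m l (l ^ (m⁻¹ : ℝ)) ≤ powEntropy m l u := by
  conv => enter [1, 2]; rw [← Real.rpow_inv_natCast_pow hl hm]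
  conv => enter [2, 2]; rw [← Real.rpow_inv_natCast_pow hl hm]
  exact powEntropy_pow_le m (by positivity) hu

theorem ConvexOn.sum_comp_apply {𝕜 E ι : Type*} [Field 𝕜] [LinearOrder 𝕜] [IsStrictOrderedRing 𝕜]
    [AddCommGroup E] [Module 𝕜 E] [Fintype ι] {s : Set 𝕜} {f : ι → 𝕜 → 𝕜}
    (hf : ∀ i, ConvexOn 𝕜 s (f i)) (L : E →ₗ[𝕜] ι → 𝕜) :
    ConvexOn 𝕜 {x | ∀ i, L x i ∈ s} fun x => ∑ i, f i (L x i) := by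
  have hconv : Convex 𝕜 {x | ∀ i, L x i ∈ s} := by
    simpa [Set.preimage, Set.pi] using
      (convex_pi (s := univ) fun i _ => (hf i).1).linear_preimage L
  have hterm (i : ι) : ConvexOn 𝕜 {x | ∀ i, L x i ∈ s} fun x => f i (L x i) :=
    ((hf i).comp_linearMap (LinearMap.proj (R := 𝕜) (φ := fun _ => 𝕜) i ∘ₗ L)).subset
      (fun _ hx => by exact hx i) hconv
  simpa only [Finset.sum_fn] using
    Finset.sum_induction (fun i x => f i (L x i)) (ConvexOn 𝕜 {x | ∀ i, L x i ∈ s})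
      (fun _ _ => ConvexOn.add) (convexOn_const 0 hconv) fun i _ => hterm i

section Orthogonal

variable {ι R : Type*} [Fintype ι] [DecidableEq ι] [CommRing R] {H : Matrix ι ι R}

theorem Matrix.conj_diagonal_pow (hH : Hᵀ * H = 1) (w : ι → R) (p : ℕ) :
    (H * diagonal w * Hᵀ) ^ p = H * diagonal (w ^ p) * Hᵀ := by
  let U : (Matrix ι ι R)ˣ := ⟨H, Hᵀ, mul_eq_one_comm.mp hH, hH⟩
  have := U.conj_pow (diagonal w) p
  rwa [diagonal_pow] at this

theorem Matrix.dotProduct_conj_diagonal_mulVec (e w : ι → R) :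
    e ⬝ᵥ (H * diagonal w * Hᵀ) *ᵥ e = ∑ i, w i * (Hᵀ *ᵥ e) i ^ 2 := by
  rw [← mulVec_mulVec, ← mulVec_mulVec, dotProduct_mulVec, ← mulVec_transpose]
  simp only [dotProduct, mulVec_diagonal]
  exact Finset.sum_congr rfl fun i _ => by ring

theorem Matrix.transpose_mulVec_dotProduct_transpose_mulVec (hH : H * Hᵀ = 1) (x y : ι → R) :
    Hᵀ *ᵥ x ⬝ᵥ Hᵀ *ᵥ y = x ⬝ᵥ y := by
  rw [dotProduct_mulVec, ← mulVec_transpose, transpose_transpose, mulVec_mulVec, hH, one_mulVec]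

end Orthogonal

theorem Matrix.posSemidef_conj_diagonal_iff {ι : Type*} [Fintype ι] [DecidableEq ι]
    {H : Matrix ι ι ℝ} (hH : Hᵀ * H = 1) (w : ι → ℝ) :
    (H * diagonal w * Hᵀ).PosSemidef ↔ ∀ i, 0 ≤ w i := by
  have hU : IsUnit H := .of_mul_eq_one_right _ hH
  rw [← posSemidef_diagonal_iff, ← hU.posSemidef_star_right_conjugate_iff (x := diagonal w),
    star_eq_conjTranspose, conjTranspose_eq_transpose_of_trivial]

namespace StochasticGalerkin

variable {ι : Type*} [Fintype ι]

theorem isDiag_conj_linearCombination {M : ι → Matrix ι ι ℝ} {H : Matrix ι ι ℝ}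
    (hM : ∀ k, (Hᵀ * M k * H).IsDiag) (α : ι → ℝ) :
    (Hᵀ * Fintype.linearCombination ℝ M α * H).IsDiag := by
  rw [Fintype.linearCombination_apply, Matrix.mul_sum, Matrix.sum_mul]
  exact Finset.sum_induction _ IsDiag (fun _ _ => IsDiag.add) isDiag_zero fun k _ => by
    simpa only [Matrix.mul_smul, Matrix.smul_mul] using (hM k).smul (α k)

/-- `D(α) = Hᵀ P(α) H` read as the vector of its diagonal entries: the eigenvalues of `P α`
when `H` diagonalises it. -/
def eigenvalues (P : (ι → ℝ) →ₗ[ℝ] Matrix ι ι ℝ) (H : Matrix ι ι ℝ) : (ι → ℝ) →ₗ[ℝ] ι → ℝ where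
  toFun α i := (Hᵀ * P α * H) i i
  map_add' α β := by ext; simp [Matrix.mul_add, Matrix.add_mul]
  map_smul' c α := by ext; simp

variable [DecidableEq ι] {P : (ι → ℝ) →ₗ[ℝ] Matrix ι ι ℝ} {H : Matrix ι ι ℝ} {e : ι → ℝ}
  (hH : Hᵀ * H = 1) (hdiag : ∀ α, (Hᵀ * P α * H).IsDiag) (he : ∀ α, P α *ᵥ e = α)
include hH hdiag

theorem eq_conj_diagonal_eigenvalues (α : ι → ℝ) :
    P α = H * diagonal (eigenvalues P H α) * Hᵀ := by
  have hHH : H * Hᵀ = 1 := mul_eq_one_comm.mp hH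
  rw [show diagonal (eigenvalues P H α) = Hᵀ * P α * H from (hdiag α).diagonal_diag]
  simp only [← Matrix.mul_assoc, hHH, Matrix.one_mul]
  rw [Matrix.mul_assoc, hHH, Matrix.mul_one]

theorem posSemidef_iff_eigenvalues_nonneg (α : ι → ℝ) :
    (P α).PosSemidef ↔ ∀ i, 0 ≤ eigenvalues P H α i := by
  rw [eq_conj_diagonal_eigenvalues hH hdiag, posSemidef_conj_diagonal_iff hH]

theorem dotProduct_pow_mulVec (α : ι → ℝ) (p : ℕ) :
    e ⬝ᵥ (P α ^ p) *ᵥ e = ∑ i, eigenvalues P H α i ^ p * (Hᵀ *ᵥ e) i ^ 2 := by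
  rw [eq_conj_diagonal_eigenvalues hH hdiag, conj_diagonal_pow hH,
    dotProduct_conj_diagonal_mulVec]
  rfl

include he

theorem transpose_mulVec_eq (α : ι → ℝ) : Hᵀ *ᵥ α = eigenvalues P H α * (Hᵀ *ᵥ e) := by
  have hcomm : Hᵀ * P α = diagonal (eigenvalues P H α) * Hᵀ := by
    conv_lhs => rw [eq_conj_diagonal_eigenvalues hH hdiag α]
    simp only [← Matrix.mul_assoc, hH, Matrix.one_mul]
  conv_lhs => rw [← he α, mulVec_mulVec, hcomm, ← mulVec_mulVec]
  ext i
  exact mulVec_diagonal _ _ i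

theorem transpose_mulVec_apply_ne_zero (i : ι) : (Hᵀ *ᵥ e) i ≠ 0 := by
  have h := congrFun (transpose_mulVec_eq hH hdiag he (H *ᵥ Pi.single i 1)) i
  rw [mulVec_mulVec, hH, one_mulVec, Pi.single_eq_same, Pi.mul_apply] at h
  exact right_ne_zero_of_mul (h ▸ one_ne_zero)

theorem eigenvalues_conj_diagonal_mulVec (w : ι → ℝ) :
    eigenvalues P H ((H * diagonal w * Hᵀ) *ᵥ e) = w := by
  ext i
  have h := congrFun (transpose_mulVec_eq hH hdiag he ((H * diagonal w * Hᵀ) *ᵥ e)) i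
  rw [mulVec_mulVec, ← Matrix.mul_assoc, ← Matrix.mul_assoc, hH, Matrix.one_mul, ← mulVec_mulVec,
    mulVec_diagonal, Pi.mul_apply] at h
  exact (mul_right_cancel₀ (transpose_mulVec_apply_ne_zero hH hdiag he i) h).symm

theorem dotProduct_eq_sum_eigenvalues (u α : ι → ℝ) :
    u ⬝ᵥ α = ∑ i, eigenvalues P H u i * eigenvalues P H α i * (Hᵀ *ᵥ e) i ^ 2 := by
  rw [← transpose_mulVec_dotProduct_transpose_mulVec (mul_eq_one_comm.mp hH),
    transpose_mulVec_eq hH hdiag he u, transpose_mulVec_eq hH hdiag he α]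
  simp only [dotProduct, Pi.mul_apply]
  exact Finset.sum_congr rfl fun i _ => by ring

end StochasticGalerkin

open StochasticGalerkin in
theorem haar_sg_root_minimizes_entropy_general {n : ℕ} [NeZero n]
    (M : Fin n → Matrix (Fin n) (Fin n) ℝ)
    (hM0 : M 0 = 1)
    (P : (Fin n → ℝ) → Matrix (Fin n) (Fin n) ℝ)
    (hP : ∀ uh, P uh = ∑ k, uh k • M k)
    (hsym : ∀ uh wh : Fin n → ℝ, (P uh).mulVec wh = (P wh).mulVec uh)
    (e0 : Fin n → ℝ) (he0 : e0 = Pi.single 0 1)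
    (H : Matrix (Fin n) (Fin n) ℝ) (hH : Hᵀ * H = 1)
    (hdiag : ∀ k, (Hᵀ * M k * H).IsDiag)
    (m : ℕ) (hm : 1 ≤ m)
    (uh : Fin n → ℝ) (huh : (P uh).PosSemidef)
    (η : (Fin n → ℝ) → ℝ)
    (hη : ∀ α, η α = (1 / ((m : ℝ) + 1)) * (e0 ⬝ᵥ (P α ^ (m + 1)).mulVec e0)
        - ∑ k, uh k * α k)
    (αm : Fin n → ℝ)
    (hαm : αm = (H * Matrix.diagonal
        (fun i => ((Hᵀ * P uh * H) i i) ^ ((m : ℝ)⁻¹)) * Hᵀ).mulVec e0) :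
    ConvexOn ℝ {x : Fin n → ℝ | (P x).PosSemidef} η ∧
      αm ∈ {x : Fin n → ℝ | (P x).PosSemidef} ∧
      ∀ α ∈ {x : Fin n → ℝ | (P x).PosSemidef}, η αm ≤ η α := by
  obtain rfl : P = Fintype.linearCombination ℝ M :=
    funext fun u => (hP u).trans (Fintype.linearCombination_apply ℝ M u).symm
  subst he0
  have hdiagP := isDiag_conj_linearCombination hdiag
  have he : ∀ α, Fintype.linearCombination ℝ M α *ᵥ Pi.single 0 1 = α := fun α => by
    rw [hsym, Fintype.linearCombination_apply_single, hM0, one_smul, one_mulVec]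
  set μ := eigenvalues (Fintype.linearCombination ℝ M) H
  set v := Hᵀ *ᵥ Pi.single (0 : Fin n) (1 : ℝ)
  have hH₀ : {x | (Fintype.linearCombination ℝ M x).PosSemidef} = {x | ∀ i, μ x i ∈ Ici 0} :=
    ext fun x => posSemidef_iff_eigenvalues_nonneg hH hdiagP x
  have hημ : η = fun α => ∑ i, v i ^ 2 * powEntropy m (μ uh i) (μ α i) := funext fun α => by
    rw [hη, ← dotProduct, dotProduct_pow_mulVec hH hdiagP,
      dotProduct_eq_sum_eigenvalues hH hdiagP he, Finset.mul_sum, ← Finset.sum_sub_distrib]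
    exact Finset.sum_congr rfl fun i _ => by simp only [powEntropy]; ring
  have hμαm : μ αm = fun i => μ uh i ^ (m⁻¹ : ℝ) :=
    hαm ▸ eigenvalues_conj_diagonal_mulVec hH hdiagP he _
  have hμuh := (posSemidef_iff_eigenvalues_nonneg hH hdiagP uh).mp huh
  rw [hH₀, hημ]
  refine ⟨ConvexOn.sum_comp_apply (fun i => (convexOn_powEntropy m _).smul (sq_nonneg (v i))) μ,
    fun i => hμαm ▸ Real.rpow_nonneg (hμuh i) _, fun α hα => Finset.sum_le_sum fun i _ => ?_⟩
  rw [hμαm]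
  exact mul_le_mul_of_nonneg_left (powEntropy_rpow_inv_le (by omega) (hμuh i) (hα i)) (sq_nonneg _)

/-- Lemma 2.2 (ii) in the Haar-type setting: for `uh ∈ H⁺₀`, the function
`η(α) := (1/(m+1)) · e₀ᵀ (P α)^{m+1} e₀ − ∑ k, uh k · α k` is convex on the
convex set `H⁺₀`, and its minimum over `H⁺₀` is attained at
`αm := H · D(uh)^{1/m} · Hᵀ e₀` (entrywise `m`-th root of the nonnegative
diagonal of `D(uh) := Hᵀ P(uh) H`). -/
theorem haar_sg_root_minimizes_entropy {n : ℕ} [NeZero n]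
    (M : Fin n → Matrix (Fin n) (Fin n) ℝ)
    (hMsymm : ∀ k, (M k).IsSymm) (hM0 : M 0 = 1)
    (P : (Fin n → ℝ) → Matrix (Fin n) (Fin n) ℝ)
    (hP : ∀ uh, P uh = ∑ k, uh k • M k)
    (hsym : ∀ uh wh : Fin n → ℝ, (P uh).mulVec wh = (P wh).mulVec uh)
    (e0 : Fin n → ℝ) (he0 : e0 = Pi.single 0 1)
    (H : Matrix (Fin n) (Fin n) ℝ) (hH : Hᵀ * H = 1)
    (hdiag : ∀ k, (Hᵀ * M k * H).IsDiag)
    (m : ℕ) (hm : 1 ≤ m)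
    (uh : Fin n → ℝ) (huh : (P uh).PosSemidef)
    (η : (Fin n → ℝ) → ℝ)
    (hη : ∀ α, η α = (1 / ((m : ℝ) + 1)) * (e0 ⬝ᵥ (P α ^ (m + 1)).mulVec e0)
        - ∑ k, uh k * α k)
    (αm : Fin n → ℝ)
    (hαm : αm = (H * Matrix.diagonal
        (fun i => ((Hᵀ * P uh * H) i i) ^ ((m : ℝ)⁻¹)) * Hᵀ).mulVec e0) :
    ConvexOn ℝ {x : Fin n → ℝ | (P x).PosSemidef} η ∧
      αm ∈ {x : Fin n → ℝ | (P x).PosSemidef} ∧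
      ∀ α ∈ {x : Fin n → ℝ | (P x).PosSemidef}, η αm ≤ η α :=
  haar_sg_root_minimizes_entropy_general M hM0 P hP hsym e0 he0 H hH hdiag m hm uh huh η hη αm hαm
end

section
/- (Theorem 3.2 (i), Jacobian of the power function) Under the Haar-type hypotheses, let γ ∈ ℝ with γ ≥ 1 and let û ∈ H⁺ (so all diagonal entries of D(û) are strictly positive). Then the map p̂(α) := H · D(α)^γ · Hᵀ e₀ (entrywise real power of the diagonal of D(α)), defined on the open set H⁺, is Fréchet differentiable at û and its derivative is the linear map represented by the matrix γ • H · D(û)^{γ−1} · Hᵀ. -/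
/-!
Write `D(α) = Hᵀ P(α) H`, diagonal and linear in `α`, and `c = Hᵀ e₀`. Since `P(w) e₀ = w`,
conjugating by the orthogonal `H` gives `Hᵀ w = D(w) c`, i.e. `(Hᵀ w)ᵢ = D(w)ᵢᵢ cᵢ`.
The map is `α ↦ H (D(α)ᵢᵢ^γ cᵢ)ᵢ`, so by the chain rule its derivative in direction `w` is
`H (γ D(û)ᵢᵢ^{γ-1} D(w)ᵢᵢ cᵢ)ᵢ = γ H D(û)^{γ-1} Hᵀ w`; this holds at every `û`, since
`x ↦ x^γ` is differentiable on all of `ℝ` when `γ ≥ 1`.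
-/

open Matrix

section Conjugation

variable {m ι R : Type*} [Fintype m] [CommRing R]

theorem transpose_mulVec_mulVec_apply_of_isDiag [DecidableEq m] [Fintype ι] [DecidableEq ι]
    {H : Matrix m ι R} (hH : H * Hᵀ = 1) {A : Matrix m m R} (hA : (Hᵀ * A * H).IsDiag)
    (e : m → R) (i : ι) :
    (Hᵀ *ᵥ (A *ᵥ e)) i = (Hᵀ * A * H) i i * (Hᵀ *ᵥ e) i := by
  calc (Hᵀ *ᵥ (A *ᵥ e)) i = ((Hᵀ * A * (H * Hᵀ)) *ᵥ e) i := by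
        rw [hH, Matrix.mul_one, mulVec_mulVec]
    _ = (diagonal (Hᵀ * A * H).diag *ᵥ (Hᵀ *ᵥ e)) i := by
        rw [hA.diagonal_diag, mulVec_mulVec, ← Matrix.mul_assoc]
    _ = (Hᵀ * A * H) i i * (Hᵀ *ᵥ e) i := mulVec_diagonal _ _ _

theorem isDiag_conj_linearCombination {κ : Type*} [Fintype κ] (H : Matrix m ι R)
    {M : κ → Matrix m m R} (hM : ∀ k, (Hᵀ * M k * H).IsDiag) (w : κ → R) :
    (Hᵀ * Fintype.linearCombination R M w * H).IsDiag := by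
  intro i j hij
  simp [Fintype.linearCombination_apply, Matrix.mul_sum, Matrix.sum_mul, Matrix.sum_apply,
    hM _ hij]

theorem linearCombination_mulVec_single [DecidableEq m] {M : m → Matrix m m R} {i₀ : m}
    (hM : M i₀ = 1)
    (hsym : ∀ u w, Fintype.linearCombination R M u *ᵥ w = Fintype.linearCombination R M w *ᵥ u)
    (w : m → R) : Fintype.linearCombination R M w *ᵥ Pi.single i₀ 1 = w := by
  rw [hsym, Fintype.linearCombination_apply_single, one_smul, hM, one_mulVec]

end Conjugation

theorem hasFDerivAt_mulVec_diagonal_comp {m ι : Type*} [Fintype m] [Fintype ι] [DecidableEq ι]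
    (H : Matrix m ι ℝ) (K : Matrix ι m ℝ) (v : m → ℝ) (δ : (m → ℝ) →ₗ[ℝ] ι → ℝ)
    (hδ : ∀ w i, δ w i * (K *ᵥ v) i = (K *ᵥ w) i) {g g' : ℝ → ℝ} {u : m → ℝ}
    (hg : ∀ i, HasDerivAt g (g' (δ u i)) (δ u i)) :
    HasFDerivAt (fun α => (H * diagonal (fun i => g (δ α i)) * K) *ᵥ v)
      (mulVecLin (H * diagonal (fun i => g' (δ u i)) * K)).toContinuousLinearMap u := by
  have hinner : HasFDerivAt (fun α i => g (δ α i) * (K *ᵥ v) i)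
      (mulVecLin (diagonal (fun i => g' (δ u i)) * K)).toContinuousLinearMap u := by
    refine hasFDerivAt_pi'.2 fun i => ?_
    have hδi := (LinearMap.proj i ∘ₗ δ).toContinuousLinearMap.hasFDerivAt (x := u)
    refine (((hg i).comp_hasFDerivAt u hδi).mul_const ((K *ᵥ v) i)).congr_fderiv ?_
    ext w
    simp only [_root_.smul_apply, ContinuousLinearMap.comp_apply,
      LinearMap.coe_toContinuousLinearMap', LinearMap.comp_apply, LinearMap.proj_apply,
      ContinuousLinearMap.proj_apply, mulVecLin_apply, ← mulVec_mulVec, mulVec_diagonal,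
      smul_eq_mul, ← hδ w i]
    ring
  have hf : (fun α => (H * diagonal (fun i => g (δ α i)) * K) *ᵥ v)
      = fun α => H *ᵥ fun i => g (δ α i) * (K *ᵥ v) i := by
    funext α
    rw [Matrix.mul_assoc, ← mulVec_mulVec, ← mulVec_mulVec]
    exact congrArg _ (funext fun i => mulVec_diagonal _ _ i)
  rw [hf]
  refine ((mulVecLin H).toContinuousLinearMap.hasFDerivAt.comp u hinner).congr_fderiv ?_
  ext w : 1
  simp [Matrix.mul_assoc]

theorem haar_sg_power_jacobian_general {n : ℕ} [NeZero n]
    (M : Fin n → Matrix (Fin n) (Fin n) ℝ)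
    (hM0 : M 0 = 1)
    (P : (Fin n → ℝ) → Matrix (Fin n) (Fin n) ℝ)
    (hP : ∀ uh, P uh = ∑ k, uh k • M k)
    (hsym : ∀ uh wh : Fin n → ℝ, (P uh).mulVec wh = (P wh).mulVec uh)
    (e0 : Fin n → ℝ) (he0 : e0 = Pi.single 0 1)
    (H : Matrix (Fin n) (Fin n) ℝ) (hH : Hᵀ * H = 1)
    (hdiag : ∀ k, (Hᵀ * M k * H).IsDiag)
    (γ : ℝ) (hγ : 1 ≤ γ)
    (uh : Fin n → ℝ) :
    HasFDerivAt
      (fun α : Fin n → ℝ =>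
        (H * Matrix.diagonal (fun i => ((Hᵀ * P α * H) i i) ^ γ) * Hᵀ).mulVec e0)
      (LinearMap.toContinuousLinearMap
        (Matrix.mulVecLin
          (γ • (H * Matrix.diagonal
            (fun i => ((Hᵀ * P uh * H) i i) ^ (γ - 1)) * Hᵀ))))
      uh := by
  obtain rfl : P = Fintype.linearCombination ℝ M :=
    funext fun u => (hP u).trans (Fintype.linearCombination_apply ℝ M u).symm
  subst he0
  let δ := diagLinearMap (Fin n) ℝ ℝ ∘ₗ LinearMap.mulRight ℝ H ∘ₗ LinearMap.mulLeft ℝ Hᵀ ∘ₗ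
    Fintype.linearCombination ℝ M
  have hδ : ∀ w i, δ w i * (Hᵀ *ᵥ Pi.single 0 1) i = (Hᵀ *ᵥ w) i := fun w i => by
    conv_rhs => rw [← linearCombination_mulVec_single hM0 hsym w]
    exact (transpose_mulVec_mulVec_apply_of_isDiag (mul_eq_one_comm.mp hH)
      (isDiag_conj_linearCombination H hdiag w) _ i).symm
  have hpow := hasFDerivAt_mulVec_diagonal_comp H Hᵀ (Pi.single 0 1) δ hδ
    (g := fun x => x ^ γ) (g' := fun x => γ * x ^ (γ - 1)) (u := uh)
    fun _ => Real.hasDerivAt_rpow_const (Or.inr hγ)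
  rw [← Matrix.smul_mul, ← Matrix.mul_smul, ← diagonal_smul]
  exact hpow

/-- Theorem 3.2 (i), Jacobian of the power function: under the Haar-type hypotheses,
for `γ ≥ 1` and `uh ∈ H⁺` (so the diagonal of `D(uh) := Hᵀ P(uh) H` is strictly
positive), the map `α ↦ H · D(α)^γ · Hᵀ e₀` (entrywise real power of the diagonal)
is Fréchet differentiable at `uh` with derivative represented by the matrix
`γ • H · D(uh)^{γ−1} · Hᵀ`. -/
theorem haar_sg_power_jacobian {n : ℕ} [NeZero n]
    (M : Fin n → Matrix (Fin n) (Fin n) ℝ)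
    (hMsymm : ∀ k, (M k).IsSymm) (hM0 : M 0 = 1)
    (P : (Fin n → ℝ) → Matrix (Fin n) (Fin n) ℝ)
    (hP : ∀ uh, P uh = ∑ k, uh k • M k)
    (hsym : ∀ uh wh : Fin n → ℝ, (P uh).mulVec wh = (P wh).mulVec uh)
    (e0 : Fin n → ℝ) (he0 : e0 = Pi.single 0 1)
    (H : Matrix (Fin n) (Fin n) ℝ) (hH : Hᵀ * H = 1)
    (hdiag : ∀ k, (Hᵀ * M k * H).IsDiag)
    (γ : ℝ) (hγ : 1 ≤ γ)
    (uh : Fin n → ℝ) (huh : (P uh).PosDef) :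
    HasFDerivAt
      (fun α : Fin n → ℝ =>
        (H * Matrix.diagonal (fun i => ((Hᵀ * P α * H) i i) ^ γ) * Hᵀ).mulVec e0)
      (LinearMap.toContinuousLinearMap
        (Matrix.mulVecLin
          (γ • (H * Matrix.diagonal
            (fun i => ((Hᵀ * P uh * H) i i) ^ (γ - 1)) * Hᵀ))))
      uh :=
  haar_sg_power_jacobian_general M hM0 P hP hsym e0 he0 H hH hdiag γ hγ uh
end

section
/- (Theorem 3.2 (ii) and (iii), identities for sign and absolute value) Under the Haar-type hypotheses, define for û : Fin n → ℝ the sign modes ŝ(û) := H · sgn(D(û)) · Hᵀ e₀, where sgn is applied entrywise to the diagonal of D(û) (with sgn(0) = 0). Then P(ŝ(û)) = H · sgn(D(û)) · Hᵀ, and the Galerkin product of the sign modes with û yields the absolute-value modes: ŝ(û) * û = P(ŝ(û)) û = H · |D(û)| · Hᵀ e₀, where |D(û)| is the entrywise absolute value of the diagonal of D(û). -/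
open Matrix

lemma sign_mul_self_eq_abs' (x : ℝ) : Real.sign x * x = |x| := by
  rcases lt_trichotomy x 0 with h | h | h
  · rw [Real.sign_of_neg h, abs_of_neg h]; ring
  · simp [h]
  · rw [Real.sign_of_pos h, abs_of_pos h]; ring

/-- Theorem 3.2 (ii) and (iii), identities for sign and absolute value: under the
Haar-type hypotheses, the sign modes `s(uh) := H · sgn(D(uh)) · Hᵀ e₀` satisfy
`P (s(uh)) = H · sgn(D(uh)) · Hᵀ`, and the Galerkin product of the sign modes with
`uh` yields the absolute-value modes: `P (s(uh)) uh = H · |D(uh)| · Hᵀ e₀`. -/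
theorem haar_sg_sign_abs_identities {n : ℕ} [NeZero n]
    (M : Fin n → Matrix (Fin n) (Fin n) ℝ)
    (hMsymm : ∀ k, (M k).IsSymm) (hM0 : M 0 = 1)
    (P : (Fin n → ℝ) → Matrix (Fin n) (Fin n) ℝ)
    (hP : ∀ uh, P uh = ∑ k, uh k • M k)
    (hsym : ∀ uh wh : Fin n → ℝ, (P uh).mulVec wh = (P wh).mulVec uh)
    (e0 : Fin n → ℝ) (he0 : e0 = Pi.single 0 1)
    (H : Matrix (Fin n) (Fin n) ℝ) (hH : Hᵀ * H = 1)
    (hdiag : ∀ k, (Hᵀ * M k * H).IsDiag)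
    (uh : Fin n → ℝ) (s : Fin n → ℝ)
    (hs : s = (H * Matrix.diagonal
        (fun i => Real.sign ((Hᵀ * P uh * H) i i)) * Hᵀ).mulVec e0) :
    P s = H * Matrix.diagonal (fun i => Real.sign ((Hᵀ * P uh * H) i i)) * Hᵀ ∧
      (P s).mulVec uh
        = (H * Matrix.diagonal (fun i => |(Hᵀ * P uh * H) i i|) * Hᵀ).mulVec e0 := by
  have hHH : H * Hᵀ = 1 := mul_eq_one_comm.mp hH
  -- P applied to e0 is the identity
  have hPe0 : ∀ u, (P u).mulVec e0 = u := by
    intro u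
    have h1 : P e0 = 1 := by
      rw [hP, he0, ← hM0]
      rw [Finset.sum_eq_single 0]
      · simp
      · intro k _ hk; simp [Pi.single_apply, hk]
      · simp
    rw [hsym u e0, h1, Matrix.one_mulVec]
  -- H^T P(u) H is diagonal
  have hPdiag : ∀ u, (Hᵀ * P u * H).IsDiag := by
    intro u i j hij
    have hrw : Hᵀ * P u * H = ∑ k, u k • (Hᵀ * M k * H) := by
      simp [hP, Matrix.mul_sum, Matrix.sum_mul, Matrix.mul_smul, Matrix.smul_mul,
        Matrix.mul_assoc]
    rw [hrw]
    simp only [Matrix.sum_apply, Matrix.smul_apply, smul_eq_mul]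
    exact Finset.sum_eq_zero fun k _ => by rw [hdiag k hij, mul_zero]
  have hPrec : ∀ u, P u = H * (Hᵀ * P u * H) * Hᵀ := by
    intro u
    calc P u = (H * Hᵀ) * P u * (H * Hᵀ) := by rw [hHH]; simp
    _ = H * (Hᵀ * P u * H) * Hᵀ := by simp only [Matrix.mul_assoc]
  have hdiag_eq : ∀ u, Hᵀ * P u * H
      = Matrix.diagonal (fun i => (Hᵀ * P u * H) i i) := by
    intro u
    ext i j
    by_cases h : i = j
    · subst h; simp
    · rw [hPdiag u h, Matrix.diagonal_apply_ne _ h]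
  -- the diagonal extraction as a linear map
  let L : (Fin n → ℝ) →ₗ[ℝ] (Fin n → ℝ) :=
    { toFun := fun u i => (Hᵀ * P u * H) i i
      map_add' := fun u v => by
        funext i
        have : P (u + v) = P u + P v := by
          simp [hP, add_smul, Finset.sum_add_distrib]
        simp [this, Matrix.add_mul, Matrix.mul_add]
      map_smul' := fun c u => by
        funext i
        have : P (c • u) = c • P u := by
          simp [hP, smul_smul, Finset.smul_sum]
        simp [this, Matrix.smul_mul, Matrix.mul_smul] }
  have hLinj : Function.Injective L := by
    intro u v huv
    have h0 : Hᵀ * P u * H = Hᵀ * P v * H := by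
      rw [hdiag_eq u, hdiag_eq v]
      exact congrArg Matrix.diagonal huv
    have hPP : P u = P v := by rw [hPrec u, hPrec v, h0]
    rw [← hPe0 u, ← hPe0 v, hPP]
  have hLsurj : Function.Surjective L := LinearMap.injective_iff_surjective.mp hLinj
  set d : Fin n → ℝ := fun i => (Hᵀ * P uh * H) i i with hd
  obtain ⟨v, hv⟩ := hLsurj (fun i => Real.sign (d i))
  have hDv : Hᵀ * P v * H = Matrix.diagonal (fun i => Real.sign (d i)) := by
    rw [hdiag_eq v]
    exact congrArg Matrix.diagonal hv
  have hPv : P v = H * Matrix.diagonal (fun i => Real.sign (d i)) * Hᵀ := by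
    rw [hPrec v, hDv]
  have hsv : s = v := by rw [hs, ← hPv, hPe0]
  have hPuh : P uh = H * Matrix.diagonal d * Hᵀ := by
    rw [hPrec uh]
    congr 1
    rw [hdiag_eq uh]
  constructor
  · rw [hsv]; exact hPv
  · rw [hsv, hPv]
    conv_lhs => rw [show uh = (P uh).mulVec e0 from (hPe0 uh).symm, hPuh]
    rw [Matrix.mulVec_mulVec]
    have habs : (fun i => Real.sign (d i) * d i)
        = fun i => |(Hᵀ * P uh * H) i i| := by
      funext i; exact sign_mul_self_eq_abs' (d i)
    have key : H * Matrix.diagonal (fun i => Real.sign (d i)) * Hᵀ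
          * (H * Matrix.diagonal d * Hᵀ)
        = H * Matrix.diagonal (fun i => |(Hᵀ * P uh * H) i i|) * Hᵀ := by
      calc H * Matrix.diagonal (fun i => Real.sign (d i)) * Hᵀ
            * (H * Matrix.diagonal d * Hᵀ)
          = H * (Matrix.diagonal (fun i => Real.sign (d i)) * (Hᵀ * H)
              * Matrix.diagonal d) * Hᵀ := by
            simp only [Matrix.mul_assoc]
        _ = H * Matrix.diagonal (fun i => |(Hᵀ * P uh * H) i i|) * Hᵀ := by
            rw [hH, Matrix.mul_one, Matrix.diagonal_mul_diagonal, habs]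
    rw [key]
end

section
/- (Theorem 3.2 (iv), p-norm identity) Under the Haar-type hypotheses, let p ≥ 1 and d ≥ 1 be integers and let û₁, …, û_d : Fin n → ℝ. Define ĉ := ∑_{i=1}^d H · |D(û_i)|^p · Hᵀ e₀ (entrywise p-th power of the entrywise absolute value of the diagonal of D(û_i)), and define the p-norm modes ŵ := H · D(ĉ)^{1/p} · Hᵀ e₀ (entrywise p-th root). Then ĉ ∈ H⁺₀ with D(ĉ) = ∑_{i=1}^d |D(û_i)|^p, ŵ ∈ H⁺₀, and (P(ŵ))^p e₀ = ĉ; that is, ŵ = T_p^{-1}(∑_i |û_i|^{*p}) as asserted in Theorem 3.2 (iv). -/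
open Matrix

/-- Theorem 3.2 (iv), `p`-norm identity: under the Haar-type hypotheses, for
integers `p, d ≥ 1` and vectors `u 1, …, u d`, setting
`c := ∑ i, H · |D(u i)|^p · Hᵀ e₀` and `w := H · D(c)^{1/p} · Hᵀ e₀`
(entrywise `p`-th root), one has `c ∈ H⁺₀` with `D(c) = ∑ i, |D(u i)|^p`,
`w ∈ H⁺₀`, and `(P w)^p e₀ = c`; i.e. `w = T_p⁻¹(∑ i |u i|^{*p})`. -/
theorem haar_sg_p_norm_identity {n : ℕ} [NeZero n]
    (M : Fin n → Matrix (Fin n) (Fin n) ℝ)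
    (hMsymm : ∀ k, (M k).IsSymm) (hM0 : M 0 = 1)
    (P : (Fin n → ℝ) → Matrix (Fin n) (Fin n) ℝ)
    (hP : ∀ uh, P uh = ∑ k, uh k • M k)
    (hsym : ∀ uh wh : Fin n → ℝ, (P uh).mulVec wh = (P wh).mulVec uh)
    (e0 : Fin n → ℝ) (he0 : e0 = Pi.single 0 1)
    (H : Matrix (Fin n) (Fin n) ℝ) (hH : Hᵀ * H = 1)
    (hdiag : ∀ k, (Hᵀ * M k * H).IsDiag)
    (p d : ℕ) (hp : 1 ≤ p) (hd : 1 ≤ d)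
    (u : Fin d → (Fin n → ℝ))
    (c : Fin n → ℝ)
    (hc : c = ∑ i, (H * Matrix.diagonal
        (fun j => |(Hᵀ * P (u i) * H) j j| ^ p) * Hᵀ).mulVec e0)
    (w : Fin n → ℝ)
    (hw : w = (H * Matrix.diagonal
        (fun j => ((Hᵀ * P c * H) j j) ^ ((p : ℝ)⁻¹)) * Hᵀ).mulVec e0) :
    (P c).PosSemidef ∧
      Hᵀ * P c * H
        = ∑ i, Matrix.diagonal (fun j => |(Hᵀ * P (u i) * H) j j| ^ p) ∧
      (P w).PosSemidef ∧
      (P w ^ p).mulVec e0 = c := by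
  have hHinv : H * Hᵀ = 1 := mul_eq_one_comm.mp hH
  have conj : ∀ A : Matrix (Fin n) (Fin n) ℝ, H * (Hᵀ * A * H) * Hᵀ = A := by
    intro A
    calc H * (Hᵀ * A * H) * Hᵀ = (H * Hᵀ) * A * (H * Hᵀ) := by
          simp only [Matrix.mul_assoc]
      _ = A := by rw [hHinv, Matrix.one_mul, Matrix.mul_one]
  -- basic linearity of P
  have hPadd : ∀ a b, P (a + b) = P a + P b := by
    intro a b; simp [hP, add_smul, Finset.sum_add_distrib]
  have hPsmul : ∀ (r : ℝ) a, P (r • a) = r • P a := by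
    intro r a; simp [hP, Finset.smul_sum, smul_smul]
  have hPe0 : P e0 = 1 := by
    rw [hP, he0]
    rw [Fintype.sum_eq_single (0 : Fin n)]
    · simp [hM0]
    · intro k hk; simp [Pi.single_apply, hk]
  have hPv : ∀ v, (P v).mulVec e0 = v := by
    intro v; rw [hsym v e0, hPe0, Matrix.one_mulVec]
  have hD : ∀ v, (Hᵀ * P v * H).IsDiag := by
    intro v i j hij
    have h : Hᵀ * P v * H = ∑ k, v k • (Hᵀ * M k * H) := by
      rw [hP, Matrix.mul_sum, Matrix.sum_mul]
      congr 1; funext k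
      simp [Matrix.mul_smul, Matrix.smul_mul]
    rw [h]
    simp only [Matrix.sum_apply, Matrix.smul_apply, smul_eq_mul]
    exact Finset.sum_eq_zero fun k _ => by rw [hdiag k hij, mul_zero]
  -- the key surjectivity lemma
  have key : ∀ f : Fin n → ℝ,
      P ((H * Matrix.diagonal f * Hᵀ).mulVec e0) = H * Matrix.diagonal f * Hᵀ := by
    intro f
    set L : (Fin n → ℝ) →ₗ[ℝ] (Fin n → ℝ) :=
      { toFun := fun v j => (Hᵀ * P v * H) j j
        map_add' := by
          intro a b; funext j
          simp [hPadd, Matrix.mul_add, Matrix.add_mul]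
        map_smul' := by
          intro r a; funext j
          simp [hPsmul, Matrix.mul_smul, Matrix.smul_mul] } with hL
    have hinj : Function.Injective L := by
      rw [← LinearMap.ker_eq_bot, LinearMap.ker_eq_bot']
      intro v hv
      have hv' : Matrix.diag (Hᵀ * P v * H) = 0 := funext fun j => congrFun hv j
      have h1 : Hᵀ * P v * H = 0 := by
        rw [← (hD v).diagonal_diag, hv']
        exact Matrix.diagonal_zero
      have h2 : P v = 0 := by rw [← conj (P v), h1, Matrix.mul_zero, Matrix.zero_mul]
      have h3 := hPv v
      rw [h2, Matrix.zero_mulVec] at h3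
      exact h3.symm
    obtain ⟨v, hv⟩ := LinearMap.injective_iff_surjective.mp hinj f
    have hdv : Hᵀ * P v * H = Matrix.diagonal f := by
      have hd' : Matrix.diag (Hᵀ * P v * H) = f := funext fun j => congrFun hv j
      rw [← (hD v).diagonal_diag, hd']
    have hPveq : P v = H * Matrix.diagonal f * Hᵀ := by rw [← conj (P v), hdv]
    have hveq : v = (H * Matrix.diagonal f * Hᵀ).mulVec e0 := by rw [← hPveq, hPv]
    rw [← hveq, hPveq]
  -- auxiliary sum lemmas
  have sum_mulVec : ∀ (A : Fin d → Matrix (Fin n) (Fin n) ℝ),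
      (∑ i, A i).mulVec e0 = ∑ i, (A i).mulVec e0 := by
    intro A
    funext j
    simp [Matrix.mulVec, dotProduct, Matrix.sum_apply, Finset.sum_apply,
      Finset.sum_mul]
    rw [Finset.sum_comm]
  have diagonal_sum : ∀ (g : Fin d → Fin n → ℝ),
      Matrix.diagonal (fun j => ∑ i, g i j) = ∑ i, Matrix.diagonal (g i) := by
    intro g
    ext j k
    by_cases hjk : j = k
    · subst hjk; simp [Matrix.sum_apply]
    · simp [Matrix.diagonal_apply_ne _ hjk, Matrix.sum_apply,
        Finset.sum_eq_zero fun i _ => Matrix.diagonal_apply_ne (g i) hjk]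
  -- the summed diagonal
  set F : Fin n → ℝ := fun j => ∑ i, |(Hᵀ * P (u i) * H) j j| ^ p with hF
  have hFnn : ∀ j, 0 ≤ F j := fun j =>
    Finset.sum_nonneg fun i _ => pow_nonneg (abs_nonneg _) p
  have hdiagF : Matrix.diagonal F
      = ∑ i, Matrix.diagonal (fun j => |(Hᵀ * P (u i) * H) j j| ^ p) :=
    diagonal_sum _
  have hc' : c = (H * Matrix.diagonal F * Hᵀ).mulVec e0 := by
    rw [hc]
    have h : H * Matrix.diagonal F * Hᵀ
        = ∑ i, H * Matrix.diagonal (fun j => |(Hᵀ * P (u i) * H) j j| ^ p) * Hᵀ := by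
      rw [hdiagF, Finset.mul_sum, Finset.sum_mul]
    rw [h, sum_mulVec]
  have hPc : P c = H * Matrix.diagonal F * Hᵀ := by rw [hc', key]
  have hDc : Hᵀ * P c * H = Matrix.diagonal F := by
    rw [hPc, ← Matrix.mul_assoc, ← Matrix.mul_assoc, hH, Matrix.one_mul,
      Matrix.mul_assoc, hH, Matrix.mul_one]
  have hw' : w = (H * Matrix.diagonal (fun j => F j ^ ((p : ℝ)⁻¹)) * Hᵀ).mulVec e0 := by
    rw [hw]
    simp only [hDc, Matrix.diagonal_apply_eq]
  have hPw : P w = H * Matrix.diagonal (fun j => F j ^ ((p : ℝ)⁻¹)) * Hᵀ := by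
    rw [hw', key]
  -- PosSemidef facts
  have psd : ∀ g : Fin n → ℝ, (∀ j, 0 ≤ g j) → (H * Matrix.diagonal g * Hᵀ).PosSemidef := by
    intro g hg
    have h1 : (Matrix.diagonal g).PosSemidef :=
      Matrix.posSemidef_diagonal_iff.mpr hg
    have h2 := h1.mul_mul_conjTranspose_same H
    simpa using h2
  refine ⟨?_, ?_, ?_, ?_⟩
  · rw [hPc]; exact psd F hFnn
  · rw [hDc, hdiagF]
  · rw [hPw]; exact psd _ fun j => Real.rpow_nonneg (hFnn j) _
  · have hpow : ∀ (g : Fin n → ℝ) (m : ℕ),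
        (H * Matrix.diagonal g * Hᵀ) ^ m = H * Matrix.diagonal (fun j => g j ^ m) * Hᵀ := by
      intro g m
      induction m with
      | zero => simp [pow_zero, hHinv]
      | succ m ih =>
        rw [pow_succ, ih]
        have e1 : (H * Matrix.diagonal (fun j => g j ^ m) * Hᵀ) * (H * Matrix.diagonal g * Hᵀ)
            = H * (Matrix.diagonal (fun j => g j ^ m) * (Hᵀ * H) * Matrix.diagonal g) * Hᵀ := by
          simp only [Matrix.mul_assoc]
        rw [e1, hH, Matrix.mul_one, Matrix.diagonal_mul_diagonal]
        have e2 : (fun i => g i ^ m * g i) = fun j => g j ^ (m + 1) :=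
          funext fun j => (pow_succ _ _).symm
        rw [e2]
    rw [hPw, hpow]
    have e3 : (fun j => (F j ^ ((p : ℝ)⁻¹)) ^ p) = F :=
      funext fun j => Real.rpow_inv_natCast_pow (hFnn j) (by omega)
    rw [e3]
    exact hc'.symm
end

section
/- (Theorem 3.2 (iv), Jacobian of the p-norm) Under the Haar-type hypotheses, let p ∈ ℝ with p ≥ 1, let d ≥ 1, fix an index i ∈ {1, …, d} and vectors û₁, …, û_d : Fin n → ℝ. Set C := ∑_{j=1}^d |D(û_j)|^p (entrywise absolute value and p-th power of the diagonals), and assume every diagonal entry of C is strictly positive and every diagonal entry of D(û_i) is nonzero. Then the map û_i ↦ H · C^{1/p} · Hᵀ e₀ (with the other arguments û_j, j ≠ i, held fixed; entrywise 1/p-th power of C) is Fréchet differentiable at û_i and its derivative is the linear map represented by the matrix H · [ C^{1/p − 1} · |D(û_i)|^{p−1} · sgn(D(û_i)) ] · Hᵀ. -/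
/-!
In the Haar basis (the columns of `H`) every Galerkin matrix is diagonal, and its diagonal
depends linearly on `û`: `diag D(û) = B û` with `B k m = (Hᵀ Mₘ H)ₖₖ`. Since `û = P(û) e₀`,
`Hᵀ û = D(û) Hᵀ e₀`, i.e. `Hᵀ = diag(Hᵀ e₀) B`. Hence the map is
`x ↦ H diag(Hᵀ e₀) Φ(B x)`, where `Φ` acts coordinatewise by `t ↦ (cₖ + |t|ᵖ)^(1/p)` with
`cₖ = ∑_{j ≠ i} |D(ûⱼ)ₖₖ|ᵖ`, and the chain rule gives the derivative
`H diag(Hᵀ e₀) diag(Φ') B = H diag(Φ') Hᵀ`.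
-/

open Matrix

theorem hasDerivAt_add_abs_rpow_rpow_inv {c a p : ℝ} (hp : p ≠ 0) (ha : a ≠ 0)
    (hc : 0 < c + |a| ^ p) :
    HasDerivAt (fun t => (c + |t| ^ p) ^ p⁻¹)
      ((c + |a| ^ p) ^ (p⁻¹ - 1) * |a| ^ (p - 1) * Real.sign a) a := by
  have habs : HasDerivAt (fun t : ℝ => c + |t| ^ p) (p * |a| ^ (p - 1) * SignType.sign a) a :=
    ((Real.hasDerivAt_rpow_const (Or.inl (abs_ne_zero.2 ha))).comp a
      (hasDerivAt_abs ha)).const_add c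
  refine ((Real.hasDerivAt_rpow_const (p := p⁻¹) (Or.inl hc.ne')).comp a habs).congr_deriv ?_
  rcases ha.lt_or_gt with h | h
  · simp [Real.sign_of_neg h, h]
    field_simp
  · simp [Real.sign_of_pos h, h]
    field_simp

theorem hasDerivAt_sum_abs_rpow_update_rpow_inv {ι : Type*} [Fintype ι] [DecidableEq ι]
    {p : ℝ} (hp : p ≠ 0) (b : ι → ℝ) (i : ι) (hb : b i ≠ 0) (hpos : 0 < ∑ j, |b j| ^ p) :
    HasDerivAt (fun t => (∑ j, |Function.update b i t j| ^ p) ^ p⁻¹)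
      ((∑ j, |b j| ^ p) ^ (p⁻¹ - 1) * |b i| ^ (p - 1) * Real.sign (b i)) (b i) := by
  have hsplit (t : ℝ) : ∑ j, |Function.update b i t j| ^ p
      = ∑ j ∈ Finset.univ \ {i}, |b j| ^ p + |t| ^ p := by
    simp_rw [Function.apply_update (fun _ s => |s| ^ p) b i t]
    rw [Finset.sum_update_of_mem (Finset.mem_univ i), add_comm]
  have hb_sum : ∑ j, |b j| ^ p = ∑ j ∈ Finset.univ \ {i}, |b j| ^ p + |b i| ^ p := by
    rw [← hsplit, Function.update_eq_self]
  simp only [hsplit, hb_sum] at hpos ⊢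
  exact hasDerivAt_add_abs_rpow_rpow_inv hp hb hpos

theorem hasFDerivAt_piMap_diagonal {ι : Type*} [Fintype ι] [DecidableEq ι]
    {φ : ι → ℝ → ℝ} {φ' v : ι → ℝ} (hφ : ∀ k, HasDerivAt (φ k) (φ' k) (v k)) :
    HasFDerivAt (fun v k => φ k (v k))
      (LinearMap.toContinuousLinearMap (diagonal φ').mulVecLin) v := by
  refine hasFDerivAt_pi'.2 fun k =>
    ((hφ k).comp_hasFDerivAt v (hasFDerivAt_apply k v)).congr_fderiv ?_
  ext y
  simp [mulVec_diagonal]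

theorem hasFDerivAt_mulVec {m n : Type*} [Fintype m] [Fintype n] (A : Matrix m n ℝ)
    (x : n → ℝ) :
    HasFDerivAt (fun y => A *ᵥ y) (LinearMap.toContinuousLinearMap A.mulVecLin) x :=
  (LinearMap.toContinuousLinearMap A.mulVecLin).hasFDerivAt

theorem HasFDerivAt.comp_mulVecLin {l m n : Type*} [Fintype l] [Fintype m] [Fintype n]
    {f : (m → ℝ) → (n → ℝ)} {g : (l → ℝ) → (m → ℝ)} {A : Matrix n m ℝ} {B : Matrix m l ℝ}
    {x : l → ℝ} (hf : HasFDerivAt f (LinearMap.toContinuousLinearMap A.mulVecLin) (g x))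
    (hg : HasFDerivAt g (LinearMap.toContinuousLinearMap B.mulVecLin) x) :
    HasFDerivAt (f ∘ g) (LinearMap.toContinuousLinearMap (A * B).mulVecLin) x :=
  (hf.comp x hg).congr_fderiv (by ext; simp [mulVec_mulVec])

theorem conj_diagonal_mulVec {n : Type*} [Fintype n] [DecidableEq n]
    (H : Matrix n n ℝ) (v e : n → ℝ) :
    (H * diagonal v * Hᵀ) *ᵥ e = (H * diagonal (Hᵀ *ᵥ e)) *ᵥ v := by
  simp only [← mulVec_mulVec]
  congr 1
  ext k
  simp only [mulVec_diagonal, mul_comm]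

section Haar

variable {n : Type*} [Fintype n] [DecidableEq n]

def conjDiag (H : Matrix n n ℝ) (M : n → Matrix n n ℝ) : Matrix n n ℝ :=
  of fun k m => (Hᵀ * M m * H) k k

theorem transpose_mul_sum_smul_mul_apply_self (H : Matrix n n ℝ) (M : n → Matrix n n ℝ)
    (x : n → ℝ) (k : n) : (Hᵀ * (∑ m, x m • M m) * H) k k = (conjDiag H M *ᵥ x) k := by
  simp [Matrix.mul_sum, Matrix.sum_mul, Matrix.sum_apply, mulVec, dotProduct, conjDiag,
    mul_comm]

theorem transpose_eq_diagonal_mul_conjDiag {H : Matrix n n ℝ} {M : n → Matrix n n ℝ}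
    {e : n → ℝ} (hH : H * Hᵀ = 1) (hdiag : ∀ m, (Hᵀ * M m * H).IsDiag)
    (hcol : ∀ m, M m *ᵥ e = Pi.single m 1) :
    Hᵀ = diagonal (Hᵀ *ᵥ e) * conjDiag H M := by
  ext k m
  have hHm : Hᵀ *ᵥ Pi.single m 1 = (Hᵀ * M m * H) *ᵥ (Hᵀ *ᵥ e) := by
    rw [← hcol, mulVec_mulVec, mulVec_mulVec, Matrix.mul_assoc _ H, hH, Matrix.mul_one]
  have hk := congrFun hHm k
  rw [(hdiag m).diagonal_diag.symm, mulVec_diagonal, mulVec_single_one] at hk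
  simpa [conjDiag, mul_comm] using hk

end Haar

theorem mulVec_single_zero_of_mulVec_comm {n : ℕ} [NeZero n]
    {M : Fin n → Matrix (Fin n) (Fin n) ℝ} (hM0 : M 0 = 1)
    (hsym : ∀ x y : Fin n → ℝ, (∑ k, x k • M k) *ᵥ y = (∑ k, y k • M k) *ᵥ x) (m : Fin n) :
    M m *ᵥ Pi.single 0 1 = Pi.single m 1 := by
  have hsum (j : Fin n) : ∑ k, (Pi.single j 1 : Fin n → ℝ) k • M k = M j := by
    simp [Pi.single_apply]
  simpa only [hsum, hM0, one_mulVec] using hsym (Pi.single m 1) (Pi.single 0 1)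

theorem haar_sg_p_norm_jacobian_general {n : ℕ} [NeZero n]
    (M : Fin n → Matrix (Fin n) (Fin n) ℝ)
    (hM0 : M 0 = 1)
    (P : (Fin n → ℝ) → Matrix (Fin n) (Fin n) ℝ)
    (hP : ∀ uh, P uh = ∑ k, uh k • M k)
    (hsym : ∀ uh wh : Fin n → ℝ, (P uh).mulVec wh = (P wh).mulVec uh)
    (e0 : Fin n → ℝ) (he0 : e0 = Pi.single 0 1)
    (H : Matrix (Fin n) (Fin n) ℝ) (hH : Hᵀ * H = 1)
    (hdiag : ∀ k, (Hᵀ * M k * H).IsDiag)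
    (p : ℝ) (hp : 1 ≤ p) (d : ℕ)
    (i : Fin d) (u : Fin d → (Fin n → ℝ))
    (Cd : Fin n → ℝ)
    (hCd : Cd = fun k => ∑ j, |(Hᵀ * P (u j) * H) k k| ^ p)
    (hCpos : ∀ k, 0 < Cd k)
    (hui : ∀ k, (Hᵀ * P (u i) * H) k k ≠ 0) :
    HasFDerivAt
      (fun x : Fin n → ℝ =>
        (H * Matrix.diagonal
          (fun k => (∑ j, |(Hᵀ * P (Function.update u i x j) * H) k k| ^ p) ^ p⁻¹)
          * Hᵀ).mulVec e0)
      (LinearMap.toContinuousLinearMap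
        (Matrix.mulVecLin
          (H * Matrix.diagonal
            (fun k => Cd k ^ (p⁻¹ - 1) * |(Hᵀ * P (u i) * H) k k| ^ (p - 1)
              * Real.sign ((Hᵀ * P (u i) * H) k k)) * Hᵀ)))
      (u i) := by
  simp only [hP] at hsym hCd hCpos hui ⊢
  subst hCd he0
  simp only [transpose_mul_sum_smul_mul_apply_self] at hCpos hui ⊢
  set B := conjDiag H M
  set w := Hᵀ *ᵥ Pi.single 0 1
  have hT : Hᵀ = diagonal w * B :=
    transpose_eq_diagonal_mul_conjDiag (mul_eq_one_comm.mp hH) hdiag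
      (mulVec_single_zero_of_mulVec_comm hM0 hsym)
  have hnorm (k : Fin n) := hasDerivAt_sum_abs_rpow_update_rpow_inv (by linarith)
    (fun j => (B *ᵥ u j) k) i (hui k) (hCpos k)
  convert (hasFDerivAt_mulVec (H * diagonal w) _).comp_mulVecLin
    ((hasFDerivAt_piMap_diagonal hnorm).comp_mulVecLin (hasFDerivAt_mulVec B (u i))) using 1
  · ext x k : 2
    simp only [conj_diagonal_mulVec, Function.comp_apply]
    congr! 6 with k' j
    exact Function.apply_update (fun _ v => (B *ᵥ v) k') u i x j
  · rw [hT, Matrix.mul_assoc, ← Matrix.mul_assoc (diagonal _) (diagonal w),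
      (commute_diagonal _ w).eq]
    simp only [Matrix.mul_assoc]

/-- Theorem 3.2 (iv), Jacobian of the `p`-norm: under the Haar-type hypotheses, for
real `p ≥ 1`, `d ≥ 1`, a fixed index `i` and vectors `u 1, …, u d`, with
`C := ∑ j, |D(u j)|^p` entrywise positive and every diagonal entry of `D(u i)`
nonzero, the map `x ↦ H · C(x)^{1/p} · Hᵀ e₀` (the `i`-th argument varying, the
others fixed) is Fréchet differentiable at `u i` with derivative represented by
the matrix `H · [C^{1/p−1} · |D(u i)|^{p−1} · sgn(D(u i))] · Hᵀ`. -/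
theorem haar_sg_p_norm_jacobian {n : ℕ} [NeZero n]
    (M : Fin n → Matrix (Fin n) (Fin n) ℝ)
    (hMsymm : ∀ k, (M k).IsSymm) (hM0 : M 0 = 1)
    (P : (Fin n → ℝ) → Matrix (Fin n) (Fin n) ℝ)
    (hP : ∀ uh, P uh = ∑ k, uh k • M k)
    (hsym : ∀ uh wh : Fin n → ℝ, (P uh).mulVec wh = (P wh).mulVec uh)
    (e0 : Fin n → ℝ) (he0 : e0 = Pi.single 0 1)
    (H : Matrix (Fin n) (Fin n) ℝ) (hH : Hᵀ * H = 1)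
    (hdiag : ∀ k, (Hᵀ * M k * H).IsDiag)
    (p : ℝ) (hp : 1 ≤ p) (d : ℕ) (hd : 1 ≤ d)
    (i : Fin d) (u : Fin d → (Fin n → ℝ))
    (Cd : Fin n → ℝ)
    (hCd : Cd = fun k => ∑ j, |(Hᵀ * P (u j) * H) k k| ^ p)
    (hCpos : ∀ k, 0 < Cd k)
    (hui : ∀ k, (Hᵀ * P (u i) * H) k k ≠ 0) :
    HasFDerivAt
      (fun x : Fin n → ℝ =>
        (H * Matrix.diagonal
          (fun k => (∑ j, |(Hᵀ * P (Function.update u i x j) * H) k k| ^ p) ^ p⁻¹)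
          * Hᵀ).mulVec e0)
      (LinearMap.toContinuousLinearMap
        (Matrix.mulVecLin
          (H * Matrix.diagonal
            (fun k => Cd k ^ (p⁻¹ - 1) * |(Hᵀ * P (u i) * H) k k| ^ (p - 1)
              * Real.sign ((Hᵀ * P (u i) * H) k k)) * Hᵀ)))
      (u i) :=
  haar_sg_p_norm_jacobian_general M hM0 P hP hsym e0 he0 H hH hdiag p hp d i u Cd hCd hCpos hui
end

section
/- (Corollary 4.2, real spectrum of the level-set Galerkin Jacobian) Let H ∈ Matrix (Fin n) (Fin n) ℝ be orthogonal (Hᵀ H = 1), let S, D₁, D₂ ∈ Matrix (Fin n) (Fin n) ℝ be diagonal, and let n₁, n₂ ∈ ℝ. Consider the 2n×2n block matrix J := fromBlocks (n₁ • H S D₁ Hᵀ) (n₁ • H S D₂ Hᵀ) (n₂ • H S D₁ Hᵀ) (n₂ • H S D₂ Hᵀ). Then the characteristic polynomial of J factors over ℝ as charpoly(J) = ∏_{i : Fin n} X · (X − μ_i), where μ_i := S i i · (n₁ · D₁ i i + n₂ · D₂ i i). In particular J has real spectrum {0} ∪ {μ_i}, which is the hyperbolicity assertion of Corollary 4.2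 for the stochastic Galerkin level-set system (there S = D(v̂) · D(‖u‖₂-modes)^{-1} and D_i = D(û_i)). -/
open Matrix Polynomial

private lemma charpoly_conj_aux {m : Type*} [Fintype m] [DecidableEq m]
    {R : Type*} [CommRing R] (P M Q : Matrix m m R) (h : P * Q = 1) :
    (P * M * Q).charpoly = M.charpoly := by
  have hmap : ∀ A B : Matrix m m R, (A * B).map C = A.map C * B.map C := by
    intro A B
    exact Matrix.map_mul
  have hscal : ∀ A : Matrix m m R, A.map C * Matrix.scalar m (X : R[X])
      = Matrix.scalar m (X : R[X]) * A.map C := by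
    intro A
    ext i j
    rw [Matrix.scalar_apply, Matrix.mul_diagonal, Matrix.diagonal_mul, mul_comm]
  have key : charmatrix (P * M * Q)
      = (P.map C) * charmatrix M * (Q.map C) := by
    rw [charmatrix, charmatrix, RingHom.mapMatrix_apply, RingHom.mapMatrix_apply,
      hmap, hmap, mul_sub, sub_mul]
    congr 1
    rw [hscal P, mul_assoc, ← hmap, h, Matrix.map_one _ (map_zero C) (map_one C),
      mul_one]
  have hdet1 : (P.map C).det * (Q.map C).det = 1 := by
    rw [← det_mul, ← Matrix.map_mul, h, Matrix.map_one _ (map_zero C) (map_one C),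
      det_one]
  rw [Matrix.charpoly, key, det_mul, det_mul, mul_right_comm, hdet1, one_mul]
  rfl

private lemma charpoly_blockDiagonal_aux {m o : Type*} [Fintype m] [DecidableEq m]
    [Fintype o] [DecidableEq o] {R : Type*} [CommRing R]
    (M : o → Matrix m m R) :
    (blockDiagonal M).charpoly = ∏ i : o, (M i).charpoly := by
  have key : charmatrix (blockDiagonal M)
      = blockDiagonal (fun i => charmatrix (M i)) := by
    ext ⟨i, a⟩ ⟨j, b⟩
    by_cases h : a = b
    · subst h
      by_cases hij : i = j
      · subst hij
        simp [charmatrix_apply_eq, Matrix.blockDiagonal_apply]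
      · rw [charmatrix_apply_ne _ _ _ (by simp [hij])]
        simp [Matrix.blockDiagonal_apply, charmatrix_apply_ne _ _ _ hij]
    · rw [charmatrix_apply_ne _ _ _ (by simp [h])]
      simp [Matrix.blockDiagonal_apply, h]
  rw [Matrix.charpoly, key, Matrix.det_blockDiagonal]
  rfl

private lemma charpoly_fin_two_aux (a b c d μ : ℝ) (hdet : a * d = b * c)
    (htr : a + d = μ) :
    (!![a, b; c, d]).charpoly = X * (X - C μ) := by
  rw [Matrix.charpoly, Matrix.det_fin_two,
    charmatrix_apply_eq, charmatrix_apply_eq,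
    charmatrix_apply_ne _ _ _ (show (0 : Fin 2) ≠ 1 by decide),
    charmatrix_apply_ne _ _ _ (show (1 : Fin 2) ≠ 0 by decide)]
  have hbc : (C b : ℝ[X]) * C c = C a * C d := by
    rw [← C_mul, ← C_mul, ← hdet]
  have hC : (C μ : ℝ[X]) = C a + C d := by rw [← C_add, htr]
  have e00 : (!![a, b; c, d] : Matrix (Fin 2) (Fin 2) ℝ) 0 0 = a := rfl
  have e01 : (!![a, b; c, d] : Matrix (Fin 2) (Fin 2) ℝ) 0 1 = b := rfl
  have e10 : (!![a, b; c, d] : Matrix (Fin 2) (Fin 2) ℝ) 1 0 = c := rfl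
  have e11 : (!![a, b; c, d] : Matrix (Fin 2) (Fin 2) ℝ) 1 1 = d := rfl
  rw [e00, e01, e10, e11, hC]
  linear_combination -hbc

/-- Corollary 4.2, real spectrum of the level-set Galerkin Jacobian: for orthogonal
`H`, diagonal `S, D₁, D₂` and reals `n₁, n₂`, the block matrix
`J = fromBlocks (n₁ • H S D₁ Hᵀ) (n₁ • H S D₂ Hᵀ) (n₂ • H S D₁ Hᵀ) (n₂ • H S D₂ Hᵀ)`
has characteristic polynomial `∏ i, X · (X − μ_i)` with
`μ_i = S i i · (n₁ · D₁ i i + n₂ · D₂ i i)`. -/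
theorem haar_sg_levelset_charpoly {n : ℕ}
    (H S D₁ D₂ : Matrix (Fin n) (Fin n) ℝ)
    (hH : Hᵀ * H = 1) (hS : S.IsDiag) (hD₁ : D₁.IsDiag) (hD₂ : D₂.IsDiag)
    (n₁ n₂ : ℝ)
    (J : Matrix (Fin n ⊕ Fin n) (Fin n ⊕ Fin n) ℝ)
    (hJ : J = Matrix.fromBlocks
        (n₁ • (H * S * D₁ * Hᵀ)) (n₁ • (H * S * D₂ * Hᵀ))
        (n₂ • (H * S * D₁ * Hᵀ)) (n₂ • (H * S * D₂ * Hᵀ))) :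
    J.charpoly
      = ∏ i : Fin n,
          (X * (X - C (S i i * (n₁ * D₁ i i + n₂ * D₂ i i)))) := by
  have hHHT : H * Hᵀ = 1 := mul_eq_one_comm.mp hH
  set P : Matrix (Fin n ⊕ Fin n) (Fin n ⊕ Fin n) ℝ := fromBlocks H 0 0 H with hP
  set M : Matrix (Fin n ⊕ Fin n) (Fin n ⊕ Fin n) ℝ :=
    fromBlocks (n₁ • (S * D₁)) (n₁ • (S * D₂)) (n₂ • (S * D₁)) (n₂ • (S * D₂))
    with hM
  have hPPT : P * Pᵀ = 1 := by
    rw [hP, Matrix.fromBlocks_transpose, Matrix.fromBlocks_multiply]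
    simp [hHHT, ← Matrix.fromBlocks_one]
  have hJPMP : J = P * M * Pᵀ := by
    rw [hJ, hP, hM, Matrix.fromBlocks_transpose, Matrix.fromBlocks_multiply,
      Matrix.fromBlocks_multiply]
    simp [Matrix.mul_smul, Matrix.smul_mul, mul_assoc]
  rw [hJPMP, charpoly_conj_aux _ _ _ hPPT]
  -- now compute the charpoly of M via a block-diagonal reindexing
  set f : Fin n → Matrix (Fin 2) (Fin 2) ℝ := fun i =>
    !![n₁ * (S i i * D₁ i i), n₁ * (S i i * D₂ i i);
       n₂ * (S i i * D₁ i i), n₂ * (S i i * D₂ i i)] with hf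
  let e : Fin 2 × Fin n ≃ Fin n ⊕ Fin n :=
    { toFun := fun x => if x.1 = 0 then Sum.inl x.2 else Sum.inr x.2
      invFun := Sum.elim (fun i => (0, i)) (fun i => (1, i))
      left_inv := by rintro ⟨a, i⟩; fin_cases a <;> simp
      right_inv := by rintro (i | i) <;> simp }
  have hMe : M = reindex e e (blockDiagonal f) := by
    have hprod : ∀ (A B : Matrix (Fin n) (Fin n) ℝ), A.IsDiag → B.IsDiag →
        ∀ i j, (A * B) i j = if i = j then A i i * B i i else 0 := by
      intro A B hA hB i j
      rw [← hA.diagonal_diag, ← hB.diagonal_diag, Matrix.diagonal_mul_diagonal]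
      by_cases h : i = j <;> simp [Matrix.diagonal_apply, h, Matrix.diag]
    ext x y
    cases x with
    | inl i =>
      cases y with
      | inl j =>
        simp only [hM, Matrix.fromBlocks_apply₁₁, Matrix.reindex_apply,
          Matrix.submatrix_apply, Matrix.smul_apply, smul_eq_mul,
          hprod _ _ hS hD₁ i j]
        by_cases h : i = j <;>
          simp [e, Matrix.blockDiagonal_apply, h, hf]
      | inr j =>
        simp only [hM, Matrix.fromBlocks_apply₁₂, Matrix.reindex_apply,
          Matrix.submatrix_apply, Matrix.smul_apply, smul_eq_mul,
          hprod _ _ hS hD₂ i j]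
        by_cases h : i = j <;>
          simp [e, Matrix.blockDiagonal_apply, h, hf]
    | inr i =>
      cases y with
      | inl j =>
        simp only [hM, Matrix.fromBlocks_apply₂₁, Matrix.reindex_apply,
          Matrix.submatrix_apply, Matrix.smul_apply, smul_eq_mul,
          hprod _ _ hS hD₁ i j]
        by_cases h : i = j <;>
          simp [e, Matrix.blockDiagonal_apply, h, hf]
      | inr j =>
        simp only [hM, Matrix.fromBlocks_apply₂₂, Matrix.reindex_apply,
          Matrix.submatrix_apply, Matrix.smul_apply, smul_eq_mul,
          hprod _ _ hS hD₂ i j]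
        by_cases h : i = j <;>
          simp [e, Matrix.blockDiagonal_apply, h, hf]
  rw [hMe, Matrix.charpoly_reindex, charpoly_blockDiagonal_aux]
  refine Finset.prod_congr rfl (fun i _ => ?_)
  rw [hf]
  exact charpoly_fin_two_aux _ _ _ _ _ (by ring) (by ring)
end

section
/- (Corollary 4.4, real spectrum of the isentropic-Euler Galerkin Jacobian) Let H ∈ Matrix (Fin n) (Fin n) ℝ be orthogonal (Hᵀ H = 1), let N₁, N₂, C ∈ Matrix (Fin n) (Fin n) ℝ be diagonal, and let n₁, n₂ ∈ ℝ with n₁² + n₂² = 1. Let B be the 3n×3n matrix written in 3×3 block form (each block n×n) as B := [[0, n₁ • 1, n₂ • 1], [n₁ • (C − N₁²) − n₂ • N₁ N₂, 2 n₁ • N₁ + n₂ • N₂, n₂ • N₁], [n₂ • (C − N₂²) − n₁ • N₁ N₂, n₁ • N₂, n₁ • N₁ + 2 n₂ • N₂]], and let J := Ĥ B Ĥᵀ, where Ĥ is the 3n×3n block-diagonal matrix with diagonal blocks H, H, H. Then the characteristic polynomial of J factors over ℝ[X] as charpoly(J) = ∏_{i : Fin n} (X − μ_i) · ((X − μ_i)²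 − c_i), where μ_i := n₁ · N₁ i i + n₂ · N₂ i i and c_i := C i i. In particular, if all c_i ≥ 0 then J has real spectrum {μ_i, μ_i ± √c_i}, which is the hyperbolicity assertion of Corollary 4.4 (there N_j = D(q̂_j) D(ρ̂)^{-1} and C = γ D(ρ̂)^{γ−1}). -/
open Matrix Polynomial

lemma charpoly_conj_orth {m : Type*} [Fintype m] [DecidableEq m]
    (U A : Matrix m m ℝ) (hU : Uᵀ * U = 1) :
    (U * A * Uᵀ).charpoly = A.charpoly := by
  have hU' : U * Uᵀ = 1 := mul_eq_one_comm.mp hU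
  have hmap : (U.map (C : ℝ →+* ℝ[X])) * (Uᵀ.map C) = 1 := by
    rw [← Matrix.map_mul, hU']; simp
  have key : charmatrix (U * A * Uᵀ) = (U.map C) * charmatrix A * (Uᵀ.map C) := by
    have hs : (Matrix.scalar m (X : ℝ[X])) = (X : ℝ[X]) • (1 : Matrix m m ℝ[X]) := by
      ext i j
      by_cases h : i = j <;> simp [Matrix.scalar_apply, Matrix.one_apply, h, diagonal_apply]
    unfold charmatrix
    rw [RingHom.mapMatrix_apply, RingHom.mapMatrix_apply, hs, Matrix.map_mul, Matrix.map_mul,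
      mul_sub, sub_mul, mul_smul_comm, smul_mul_assoc, mul_one, hmap, Matrix.mul_assoc]
  unfold Matrix.charpoly
  rw [key, det_mul, det_mul]
  have h1 : (U.map (C : ℝ →+* ℝ[X])).det * (Uᵀ.map C).det = 1 := by
    rw [← det_mul, hmap, det_one]
  calc (U.map (C : ℝ →+* ℝ[X])).det * (charmatrix A).det * (Uᵀ.map C).det
      = (charmatrix A).det * ((U.map C).det * (Uᵀ.map C).det) := by ring
    _ = (charmatrix A).det := by rw [h1, mul_one]

lemma charmatrix_blockDiagonal' {m o R : Type*} [Fintype m] [DecidableEq m] [Fintype o]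
    [DecidableEq o] [CommRing R] (M : o → Matrix m m R) :
    charmatrix (blockDiagonal M) = blockDiagonal fun i => charmatrix (M i) := by
  ext ⟨a, i⟩ ⟨b, j⟩
  by_cases h : (a, i) = (b, j)
  · obtain ⟨rfl, rfl⟩ := Prod.mk.injEq .. ▸ h
    simp [charmatrix_apply_eq, blockDiagonal_apply]
  · rw [charmatrix_apply_ne _ _ _ h]
    rcases eq_or_ne i j with rfl | hij
    · have hab : a ≠ b := fun hab => h (by rw [hab])
      simp [blockDiagonal_apply, charmatrix_apply_ne _ _ _ hab]
    · simp [blockDiagonal_apply, hij]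

lemma charpoly_three_aux (n₁ n₂ a b c : ℝ) (hdir : n₁ ^ 2 + n₂ ^ 2 = 1) :
    (!![0, n₁, n₂;
        n₁ * (c - a ^ 2) - n₂ * (a * b), 2 * n₁ * a + n₂ * b, n₂ * a;
        n₂ * (c - b ^ 2) - n₁ * (a * b), n₁ * b, n₁ * a + 2 * n₂ * b]).charpoly
      = (X - C (n₁ * a + n₂ * b)) * ((X - C (n₁ * a + n₂ * b)) ^ 2 - C c) := by
  have hC : (C n₁) ^ 2 + (C n₂) ^ 2 = 1 := by
    rw [← C_pow, ← C_pow, ← C_add, hdir, C_1]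
  rw [Matrix.charpoly, Matrix.det_fin_three]
  simp [charmatrix_apply, diagonal_apply, C_sub, C_mul, C_add, C_pow, map_ofNat]
  linear_combination (C c * (C n₁ * C a + C n₂ * C b) - C c * X) * hC

/-- Corollary 4.4, real spectrum of the isentropic-Euler Galerkin Jacobian: with
orthogonal `H`, diagonal `N₁, N₂, Cm`, unit direction `(n₁, n₂)`, the block
matrix `B` below and `J := Hb B Hbᵀ` (with `Hb` the block-diagonal matrix with
blocks `H, H, H`), the characteristic polynomial of `J` factors as
`∏ i, (X − μ_i) · ((X − μ_i)² − c_i)` where `μ_i = n₁ N₁ i i + n₂ N₂ i i` and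
`c_i = Cm i i`. -/
theorem haar_sg_euler_charpoly {n : ℕ}
    (H N₁ N₂ Cm : Matrix (Fin n) (Fin n) ℝ)
    (hH : Hᵀ * H = 1) (hN₁ : N₁.IsDiag) (hN₂ : N₂.IsDiag) (hCm : Cm.IsDiag)
    (n₁ n₂ : ℝ) (hdir : n₁ ^ 2 + n₂ ^ 2 = 1)
    (B : Matrix (Fin 3 × Fin n) (Fin 3 × Fin n) ℝ)
    (hB : B = Matrix.of fun p q : Fin 3 × Fin n =>
      (![![(0 : Matrix (Fin n) (Fin n) ℝ), n₁ • (1 : Matrix (Fin n) (Fin n) ℝ),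
            n₂ • (1 : Matrix (Fin n) (Fin n) ℝ)],
          ![n₁ • (Cm - N₁ ^ 2) - n₂ • (N₁ * N₂), (2 * n₁) • N₁ + n₂ • N₂,
            n₂ • N₁],
          ![n₂ • (Cm - N₂ ^ 2) - n₁ • (N₁ * N₂), n₁ • N₂,
            n₁ • N₁ + (2 * n₂) • N₂]] p.1 q.1) p.2 q.2)
    (Hb : Matrix (Fin 3 × Fin n) (Fin 3 × Fin n) ℝ)
    (hHb : Hb = Matrix.of fun p q : Fin 3 × Fin n =>
      if p.1 = q.1 then H p.2 q.2 else 0)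
    (J : Matrix (Fin 3 × Fin n) (Fin 3 × Fin n) ℝ)
    (hJ : J = Hb * B * Hbᵀ) :
    J.charpoly
      = ∏ i : Fin n,
          ((X - C (n₁ * N₁ i i + n₂ * N₂ i i))
            * ((X - C (n₁ * N₁ i i + n₂ * N₂ i i)) ^ 2 - C (Cm i i))) := by
  obtain ⟨d₁, rfl⟩ : ∃ d, N₁ = diagonal d := ⟨N₁.diag, hN₁.diagonal_diag.symm⟩
  obtain ⟨d₂, rfl⟩ : ∃ d, N₂ = diagonal d := ⟨N₂.diag, hN₂.diagonal_diag.symm⟩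
  obtain ⟨dc, rfl⟩ : ∃ d, Cm = diagonal d := ⟨Cm.diag, hCm.diagonal_diag.symm⟩
  -- orthogonality of Hb
  have hHb1 : Hbᵀ * Hb = 1 := by
    subst hHb
    ext ⟨a, i⟩ ⟨b, j⟩
    simp only [Matrix.mul_apply, transpose_apply, Matrix.of_apply, Fintype.sum_prod_type,
      Matrix.one_apply, Prod.mk.injEq]
    rcases eq_or_ne a b with rfl | hab
    · simp only [if_pos rfl, true_and]
      rw [Finset.sum_eq_single a]
      · have := congrFun (congrFun hH i) j
        simpa [Matrix.mul_apply, Matrix.one_apply] using this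
      · intro c _ hc; simp [Ne.symm hc, hc]
      · simp
    · simp only [hab, false_and, if_false]
      apply Finset.sum_eq_zero
      intro c _
      rcases eq_or_ne c a with rfl | hca
      · simp [hab]
      · simp [Ne.symm hca, hca]
  -- B is block diagonal with 3×3 blocks
  have hBD : B = blockDiagonal fun i : Fin n =>
      !![0, n₁, n₂;
         n₁ * (dc i - d₁ i ^ 2) - n₂ * (d₁ i * d₂ i), 2 * n₁ * d₁ i + n₂ * d₂ i, n₂ * d₁ i;
         n₂ * (dc i - d₂ i ^ 2) - n₁ * (d₁ i * d₂ i), n₁ * d₂ i, n₁ * d₁ i + 2 * n₂ * d₂ i] := by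
    subst hB
    ext ⟨a, i⟩ ⟨b, j⟩
    rcases eq_or_ne i j with rfl | hij
    · fin_cases a <;> fin_cases b <;>
        simp [blockDiagonal_apply, pow_two, diagonal_mul_diagonal, diagonal_apply,
          Matrix.one_apply]
    · fin_cases a <;> fin_cases b <;>
        simp [blockDiagonal_apply, pow_two, diagonal_mul_diagonal, diagonal_apply, hij,
          Matrix.one_apply]
  have h1 : J.charpoly = B.charpoly := by
    rw [hJ]; exact charpoly_conj_orth Hb B hHb1
  rw [h1, hBD, Matrix.charpoly, charmatrix_blockDiagonal', det_blockDiagonal]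
  refine Finset.prod_congr rfl fun i _ => ?_
  rw [← Matrix.charpoly, charpoly_three_aux n₁ n₂ (d₁ i) (d₂ i) (dc i) hdir]
  simp [diagonal_apply_eq]
end
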